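/- Let $F$ be a finite field with $q$ elements and let $W$ be a fixed $w \times w$ matrix over $F$. If $S$ is a random $w \times w$ diagonal matrix whose diagonal entries $s_1,\dots,s_w$ are chosen independently and uniformly at random from $F$, then the probability that $S - W$ is invertible is at least $1 - w/q$. -/

import Mathlib

/-!
The polynomial `det (diag(X₁, …, X_w) - W)` has total degree at most `w`, and it is nonzero
because identifying all the variables `Xᵢ` with a single `X` turns it into the (monic)
characteristic polynomial of `W`. Schwartz–Zippel then bounds the proportion of its zeros
in `F^w` by `w / q`.
-/

open Finset Matrix MvPolynomial

namespace Matrix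

variable {n R : Type*} [Fintype n] [DecidableEq n] [CommRing R]

theorem totalDegree_det_le {σ : Type*} (M : Matrix n n (MvPolynomial σ R)) {d : ℕ}
    (h : ∀ i j, (M i j).totalDegree ≤ d) : M.det.totalDegree ≤ Fintype.card n * d := by
  rw [det_apply]
  refine (totalDegree_finsetSum _ _).trans <| Finset.sup_le fun e _ => ?_
  calc (Equiv.Perm.sign e • ∏ i, M (e i) i).totalDegree
      ≤ (∏ i, M (e i) i).totalDegree := by
        rw [Units.smul_def]; exact totalDegree_smul_le _ _
    _ ≤ ∑ i, (M (e i) i).totalDegree := totalDegree_finsetProd _ _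
    _ ≤ ∑ _i : n, d := Finset.sum_le_sum fun i _ => h _ _
    _ = Fintype.card n * d := by simp

theorem totalDegree_det_diagonal_X_sub_map_C_le (W : Matrix n n R) :
    (diagonal X - W.map C).det.totalDegree ≤ Fintype.card n := by
  refine (totalDegree_det_le _ fun i j => ?_).trans_eq (mul_one _)
  refine (totalDegree_sub _ _).trans (max_le ?_ (by simp))
  by_cases h : i = j
  · simpa [h, X] using (totalDegree_monomial_le (Finsupp.single j 1) (1 : R)).trans_eq (by simp)
  · simp [h]

theorem eval_det_diagonal_X_sub_map_C (W : Matrix n n R) (s : n → R) :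
    eval s (diagonal X - W.map C).det = (diagonal s - W).det := by
  rw [RingHom.map_det]
  congr 1
  ext i j
  by_cases h : i = j <;> simp [h]

theorem det_diagonal_X_sub_map_C_ne_zero [Nontrivial R] (W : Matrix n n R) :
    (diagonal X - W.map C).det ≠ 0 := by
  intro h
  have key : aeval (fun _ => Polynomial.X) (diagonal X - W.map C).det = W.charpoly := by
    rw [AlgHom.map_det]
    congr 1
    ext i j : 1
    by_cases h : i = j <;> simp [h]
  rw [h, map_zero] at key
  exact W.charpoly_monic.ne_zero key.symm

end Matrix

theorem card_filter_det_diagonal_sub_eq_zero_div_le {R : Type*} [CommRing R] [IsDomain R]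
    [Fintype R] [DecidableEq R] {w : ℕ} (W : Matrix (Fin w) (Fin w) R) :
    (#{s : Fin w → R | (diagonal s - W).det = 0} : ℚ≥0) / (Fintype.card R ^ w : ℚ≥0)
      ≤ w / Fintype.card R := by
  have h := schwartz_zippel_totalDegree (det_diagonal_X_sub_map_C_ne_zero W) univ
  simp only [Fintype.piFinset_univ, eval_det_diagonal_X_sub_map_C, card_univ] at h
  refine h.trans ?_
  gcongr
  simpa using totalDegree_det_diagonal_X_sub_map_C_le W

/-- If `W` is a fixed `w × w` matrix over a finite field `F` with `q` elements and the
diagonal entries of a diagonal matrix `S` are chosen independently and uniformly at random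
from `F`, then `S - W` is invertible with probability at least `1 - w/q`. -/
theorem stmt0 (F : Type*) [Field F] [Fintype F] [DecidableEq F] (w : ℕ)
    (W : Matrix (Fin w) (Fin w) F) :
    (((Finset.univ.filter
        (fun s : Fin w → F => IsUnit (Matrix.diagonal s - W))).card : ℝ) /
      ((Fintype.card F : ℝ) ^ w))
      ≥ 1 - (w : ℝ) / (Fintype.card F : ℝ) := by
  have hbad : (#{s : Fin w → F | (diagonal s - W).det = 0} : ℝ) / Fintype.card F ^ w
      ≤ w / Fintype.card F := by
    have h := NNRat.cast_le (K := ℝ) |>.mpr (card_filter_det_diagonal_sub_eq_zero_div_le W)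
    push_cast at h
    exact h
  have hsplit : (#{s : Fin w → F | IsUnit (diagonal s - W)} : ℝ)
      + #{s : Fin w → F | (diagonal s - W).det = 0} = Fintype.card F ^ w := by
    simp_rw [isUnit_iff_isUnit_det, isUnit_iff_ne_zero]
    rw [add_comm]
    exact_mod_cast (card_filter_add_card_filter_not _).trans (by simp)
  have hgood : (#{s : Fin w → F | IsUnit (diagonal s - W)} : ℝ) / Fintype.card F ^ w
      = 1 - #{s : Fin w → F | (diagonal s - W).det = 0} / Fintype.card F ^ w := by
    rw [eq_sub_iff_add_eq, ← add_div, hsplit, div_self (by positivity)]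
  linarith
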